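/- arXiv:1507.00931 — 3 statements merged into one kernel-verified Lean document; each statement's English description precedes it below -/
import Mathlib

section
/- Let A and B be finite algebras with the same purely functional signature τ. Then B is a homomorphic image of a subalgebra of a finite power of A (i.e., B ∈ H(S(Pfin({A})))) if and only if for all τ-terms s and t, s^A = t^A implies s^B = t^B (i.e., the natural homomorphism from Clo(A) onto Clo(B), sending t^A to t^B, is well defined). -/
/-!
Birkhoff's HSP theorem for finite algebras: for finite algebras `A`, `B` of the same
purely functional signature `σ`, `B ∈ H(S(Pfin({A})))` iff the natural map
`t^A ↦ t^B` between the term clones is well defined.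
-/

universe u v

/-- An interpretation of the purely functional signature `σ` (where `σ n` is the set of
`n`-ary operation symbols) on the carrier set `A`; this is the data of an algebra on `A`. -/
def Interp (σ : ℕ → Type v) (A : Type u) : Type max u v :=
  ∀ n, σ n → (Fin n → A) → A

/-- Abstract `σ`-terms in variables `x_1, …, x_k`. -/
inductive Term (σ : ℕ → Type v) (k : ℕ) : Type v where
  | var : Fin k → Term σ k
  | app : {n : ℕ} → σ n → (Fin n → Term σ k) → Term σ k

/-- The `k`-ary operation `t^A` induced by a term `t` on an algebra with interpretation `iA`. -/
def Term.realize {σ : ℕ → Type v} {A : Type u} {k : ℕ} (iA : Interp σ A) :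
    Term σ k → (Fin k → A) → A
  | .var i, v => v i
  | .app s ts, v => iA _ s fun j => (ts j).realize iA v

/-- `h : A → B` is a homomorphism of `σ`-algebras. -/
def IsHom {σ : ℕ → Type v} {A : Type u} {B : Type u} (iA : Interp σ A) (iB : Interp σ B)
    (h : A → B) : Prop :=
  ∀ (n : ℕ) (s : σ n) (a : Fin n → A), h (iA n s a) = iB n s fun i => h (a i)

/-- A subset `S` of an algebra is closed under all (interpreted) operations,
i.e., it is (the domain of) a subalgebra. -/
def ClosedUnder {σ : ℕ → Type v} {A : Type u} (iA : Interp σ A) (S : Set A) : Prop :=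
  ∀ (n : ℕ) (s : σ n) (a : Fin n → A), (∀ i, a i ∈ S) → iA n s a ∈ S

/-- The power algebra `A^I`, with operations acting componentwise. -/
def powInterp {σ : ℕ → Type v} {A : Type u} (iA : Interp σ A) (I : Type w) :
    Interp σ (I → A) :=
  fun n s a i => iA n s fun j => a j i

/-- The subalgebra of an algebra on the subset `S`, which is closed under the operations. -/
def subInterp {σ : ℕ → Type v} {A : Type u} (iA : Interp σ A) {S : Set A}
    (hS : ClosedUnder iA S) : Interp σ S :=
  fun n s a => ⟨iA n s fun i => (a i : A), hS n s _ fun i => (a i).2⟩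

/-- `B ∈ H(S(Pfin({A})))`: `B` is (up to isomorphism) a homomorphic image of a subalgebra of a
finite power of `A`. -/
def InHSPfin {σ : ℕ → Type v} {A B : Type u} (iA : Interp σ A) (iB : Interp σ B) : Prop :=
  ∃ (m : ℕ) (S : Set (Fin m → A)) (hS : ClosedUnder (powInterp iA (Fin m)) S) (h : S → B),
    IsHom (subInterp (powInterp iA (Fin m)) hS) iB h ∧ Function.Surjective h

theorem hom_realize {σ : ℕ → Type v} {A : Type u} {B : Type u} {iA : Interp σ A}
    {iB : Interp σ B} {h : A → B} (hh : IsHom iA iB h) {k : ℕ} (t : Term σ k)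
    (v : Fin k → A) : h (t.realize iA v) = t.realize iB (fun i => h (v i)) := by
  induction t with
  | var i => rfl
  | app s ts ih =>
    show h (iA _ s fun j => (ts j).realize iA v) = iB _ s fun j => (ts j).realize iB _
    rw [hh]
    exact congrArg _ (funext fun j => ih j)

/-- **Birkhoff's theorem for finite algebras.** For finite algebras `A`, `B` of the same purely
functional signature, `B ∈ H(S(Pfin({A})))` if and only if for all terms `s, t`, `s^A = t^A`
implies `s^B = t^B` (i.e., the natural homomorphism `Clo(A) → Clo(B)`, `t^A ↦ t^B`,
is well defined). -/
theorem statement0 {σ : ℕ → Type v} {A B : Type u} [Finite A] [Finite B]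
    (iA : Interp σ A) (iB : Interp σ B) :
    InHSPfin iA iB ↔
      ∀ (k : ℕ) (s t : Term σ k),
        (∀ v : Fin k → A, s.realize iA v = t.realize iA v) →
        ∀ v : Fin k → B, s.realize iB v = t.realize iB v := by
  constructor
  · rintro ⟨m, S, hS, h, hhom, hsurj⟩ k s t heq v
    choose u hu using fun i => hsurj (v i)
    have coeHom : ∀ j : Fin m,
        IsHom (subInterp (powInterp iA (Fin m)) hS) iA (fun x => (x : Fin m → A) j) :=
      fun j n s a => rfl
    have key : ∀ r : Term σ k,
        r.realize iB v = h (r.realize (subInterp (powInterp iA (Fin m)) hS) u) := by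
      intro r
      rw [hom_realize hhom]
      congr 1
      funext i
      exact (hu i).symm
    rw [key s, key t]
    congr 1
    apply Subtype.ext
    funext j
    have hs := hom_realize (coeHom j) s u
    have ht := hom_realize (coeHom j) t u
    exact hs.trans ((heq _).trans ht.symm)
  · intro H
    obtain ⟨k, ⟨eB⟩⟩ := Finite.exists_equiv_fin B
    obtain ⟨m, ⟨eI⟩⟩ := Finite.exists_equiv_fin (Fin k → A)
    set idx : Fin m → (Fin k → A) := fun j => eI.symm j with hidx
    set vB : Fin k → B := fun i => eB.symm i with hvB
    set S : Set (Fin m → A) :=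
      {g | ∃ t : Term σ k, g = fun j => t.realize iA (idx j)} with hSdef
    have hS : ClosedUnder (powInterp iA (Fin m)) S := by
      intro n s a ha
      choose ts hts using ha
      refine ⟨Term.app s ts, funext fun j => ?_⟩
      show iA n s (fun i => a i j) = iA n s fun i => (ts i).realize iA (idx j)
      exact congrArg _ (funext fun i => congrFun (hts i) j)
    have mem : ∀ g : S, ∃ t : Term σ k, (g : Fin m → A) = fun j => t.realize iA (idx j) :=
      fun g => g.2
    let h : S → B := fun g => (mem g).choose.realize iB vB
    have key : ∀ (g : S) (t : Term σ k),
        (g : Fin m → A) = (fun j => t.realize iA (idx j)) → h g = t.realize iB vB := by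
      intro g t hg
      apply H k (mem g).choose t
      intro w
      have h0 := (mem g).choose_spec
      have := congrFun (h0.symm.trans hg) (eI w)
      simpa [hidx] using this
    refine ⟨m, S, hS, h, ?_, ?_⟩
    · intro n s a
      choose ts hts using fun i => mem (a i)
      have hval : ((subInterp (powInterp iA (Fin m)) hS n s a : S) : Fin m → A) =
          fun j => (Term.app s ts).realize iA (idx j) := by
        funext j
        show iA n s (fun i => (a i : Fin m → A) j) = iA n s fun i => (ts i).realize iA (idx j)
        exact congrArg _ (funext fun i => congrFun (hts i) j)
      rw [key _ _ hval]
      show iB n s (fun i => (ts i).realize iB vB) = iB n s fun i => h (a i)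
      exact congrArg _ (funext fun i => (key (a i) (ts i) (hts i)).symm)
    · intro b
      refine ⟨⟨fun j => (Term.var (eB b)).realize iA (idx j), ⟨Term.var (eB b), rfl⟩⟩, ?_⟩
      rw [key _ (Term.var (eB b)) rfl]
      show vB (eB b) = b
      simp [hvB]
end

section
/- Let C be a function clone on a set D such that for every n ≥ 1 the set of n-ary members of C is closed in the topology of pointwise convergence. Then there exists a family (R_i)_{i ∈ I} of finitary relations on D (each R_i ⊆ D^{k_i} for some k_i ≥ 1) such that C is exactly the set of finitary operations on D preserving every R_i. -/
/-!
Every arity-wise topologically closed function clone on `D` is the set of all finitary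
operations preserving some family of finitary relations on `D`.
-/

universe u v

/-- A function clone on `D`: an arity-indexed family of sets of finitary operations on `D`
(the index `n` corresponding to the `(n+1)`-ary operations, so that all arities are `≥ 1`)
containing all projections and closed under composition. -/
def IsClone {D : Type u} (C : ∀ n : ℕ, Set ((Fin (n + 1) → D) → D)) : Prop :=
  (∀ (n : ℕ) (k : Fin (n + 1)), (fun v => v k) ∈ C n) ∧
  (∀ (n m : ℕ) (f : (Fin (n + 1) → D) → D) (g : Fin (n + 1) → (Fin (m + 1) → D) → D),
    f ∈ C n → (∀ i, g i ∈ C m) → (fun v => f fun i => g i v) ∈ C m)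

/-- The operation `f` preserves the relation `R ⊆ D^k`: applying `f` componentwise to tuples
from `R` again yields a tuple in `R`. -/
def Preserves {D : Type u} {n k : ℕ} (f : (Fin n → D) → D) (R : Set (Fin k → D)) : Prop :=
  ∀ r : Fin n → Fin k → D, (∀ j, r j ∈ R) → (fun x => f fun j => r j x) ∈ R

/-- The polymorphism clone of the relational structure on `D` with relations `R i ⊆ D^(ar i)`:
its `(n+1)`-ary part consists of all `(n+1)`-ary operations preserving every relation. -/
def PolSet {D : Type u} {ι : Type v} (ar : ι → ℕ) (R : ∀ i, Set (Fin (ar i) → D)) :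
    ∀ n : ℕ, Set ((Fin (n + 1) → D) → D) :=
  fun _ => {f | ∀ i, Preserves f (R i)}

/-- Every function clone `C` on `D` whose arity-wise parts are closed in the topology of
pointwise convergence is the polymorphism clone of some relational structure: there is a
family of relations `R i ⊆ D^(k_i)` (with `k_i ≥ 1`) such that `C` consists exactly of the
finitary operations preserving every `R i`. -/
theorem statement6 {D : Type u} [TopologicalSpace D] [DiscreteTopology D]
    (C : ∀ n : ℕ, Set ((Fin (n + 1) → D) → D))
    (hC : IsClone C) (hcl : ∀ n, IsClosed (C n)) :
    ∃ (ι : Type u) (ar : ι → ℕ) (R : ∀ i, Set (Fin (ar i + 1) → D)),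
      ∀ n, C n = PolSet (fun i => ar i + 1) R n := by
  classical
  refine ⟨(m : ℕ) × (k : ℕ) × (Fin (k + 1) → Fin (m + 1) → D),
    fun i => i.2.1,
    fun i => {t | ∃ g ∈ C i.1, ∀ x, g (i.2.2 x) = t x}, ?_⟩
  intro n
  ext f
  constructor
  · -- f ∈ C n preserves all the relations
    intro hf i r hr
    obtain ⟨m, k, a⟩ := i
    choose g hg hgr using hr
    refine ⟨fun v => f fun j => g j v, hC.2 n m f g hf hg, ?_⟩
    intro x
    simp only []
    congr 1
    funext j
    exact hgr j x
  · -- f preserving all relations lies in C n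
    intro hf
    by_cases hD : Nonempty D
    · have : Inhabited D := Classical.inhabited_of_nonempty hD
      rw [← (hcl n).closure_eq]
      rw [mem_closure_iff_nhds]
      intro s hs
      rw [nhds_pi, Filter.mem_pi] at hs
      obtain ⟨I, hIfin, t, ht, hsub⟩ := hs
      -- enumerate I by a finite tuple
      set l := hIfin.toFinset.toList with hl
      set a : Fin (l.length + 1) → Fin (n + 1) → D :=
        fun x => l.getD x.val default with ha
      have hIa : ∀ v ∈ I, ∃ x, a x = v := by
        intro v hv
        have hvl : v ∈ l := by
          simp only [hl, Finset.mem_toList, Set.Finite.mem_toFinset]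
          exact hv
        obtain ⟨x, hx⟩ := List.get_of_mem hvl
        refine ⟨⟨x.val, Nat.lt_succ_of_lt x.isLt⟩, ?_⟩
        rw [ha]
        simp only []
        rw [List.getD_eq_getElem l default x.isLt]
        simpa using hx
      -- apply preservation to the relation indexed by (n, l.length, a)
      have key := hf ⟨n, l.length, a⟩ (fun j x => a x j) ?_
      · obtain ⟨g, hg, hgf⟩ := key
        refine ⟨g, hsub ?_, hg⟩
        intro v hv
        obtain ⟨x, hx⟩ := hIa v hv
        have : g v = f v := by
          rw [← hx]
          exact hgf x
        rw [this]
        have := ht v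
        rwa [mem_nhds_discrete] at this
      · intro j
        exact ⟨fun v => v j, hC.1 n j, fun x => rfl⟩
    · -- D empty: the function space is a subsingleton
      have : f = fun v => v 0 := by
        funext v
        exact absurd ⟨v 0⟩ hD
      rw [this]
      exact hC.1 n 0
end

section
/- Let C be a Fraïssé class of finite relational structures and let Δ be its Fraïssé limit. Then C is a Ramsey class if and only if for all Ω_0, Ω_1 ∈ C and every coloring with two colors of the substructures of Δ isomorphic to Ω_0 there exists a substructure Ω_1' of Δ isomorphic to Ω_1 such that all substructures of Ω_1' isomorphic to Ω_0 have the same color. -/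
/-!
An embedding `N ↪ M` transports colourings of `M` back to `N` and monochromatic copies forward,
so an arrow `N ⟶ (Ω₁)^{Ω₀}` passes to `M`; as the members of the age embed into `M`, a Ramsey
class gives the colouring property of `M`. The converse is compactness: if no finite substructure
of `M` arrows `(Ω₁)^{Ω₀}`, fix a bad colouring of each `closure s`, `s` a finset (finite, the
language being relational), and take their limit along an ultrafilter refining `atTop`. A
monochromatic copy of `Ω₁` for the limit colouring is finite and has finitely many substructures,
so for some large `s` the limit agrees on all of them with the bad colouring of `closure s`,
a contradiction. A finite substructure of `M` with the arrow property is a copy of a member of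
the age, which is the required `Ω₂`.
-/

open FirstOrder FirstOrder.Language

/-- The age of the structure `M`: the class of all finite structures that embed into `M`
(this represents, up to isomorphism, the class of finite substructures of `M`). -/
def ageOf (L : Language) (M : Type) [L.Structure M] :
    Set (CategoryTheory.Bundled L.Structure) :=
  {N | Finite N ∧ Nonempty (N ↪[L] M)}

/-- `K` is a Ramsey class: for all `Ω₀, Ω₁ ∈ K` there is `Ω₂ ∈ K` such that for every
`2`-coloring of the substructures of `Ω₂` isomorphic to `Ω₀` there is a substructure of `Ω₂`
isomorphic to `Ω₁` inside which all substructures isomorphic to `Ω₀` get the same color. -/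
def IsRamseyClass (L : Language) (K : Set (CategoryTheory.Bundled L.Structure)) : Prop :=
  ∀ Ω₀ ∈ K, ∀ Ω₁ ∈ K, ∃ Ω₂ ∈ K,
    ∀ χ : L.Substructure Ω₂ → Fin 2,
      ∃ S₁ : L.Substructure Ω₂, Nonempty (Ω₁ ≃[L] S₁) ∧
        ∀ S S' : L.Substructure Ω₂, S ≤ S₁ → S' ≤ S₁ →
          Nonempty (Ω₀ ≃[L] S) → Nonempty (Ω₀ ≃[L] S') → χ S = χ S'

/-- `K` is a Fraïssé class of finite relational structures: a class of finite structures
closed under isomorphism and (induced) substructures which has the joint embedding property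
and the amalgamation property. -/
def IsFraisseClass (L : Language) (K : Set (CategoryTheory.Bundled L.Structure)) : Prop :=
  -- all members are finite
  (∀ N ∈ K, Finite N) ∧
  -- closed under isomorphism
  (∀ N ∈ K, ∀ P : CategoryTheory.Bundled L.Structure, Nonempty (P ≃[L] N) → P ∈ K) ∧
  -- closed under substructures (up to isomorphism: anything embedding into a member)
  (∀ N ∈ K, ∀ P : CategoryTheory.Bundled L.Structure,
    Finite P → Nonempty (P ↪[L] N) → P ∈ K) ∧
  -- joint embedding property
  (∀ N ∈ K, ∀ P ∈ K, ∃ Q ∈ K, Nonempty (N ↪[L] Q) ∧ Nonempty (P ↪[L] Q)) ∧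
  -- amalgamation property
  (∀ Ω₀ Ω₁ Ω₂ : CategoryTheory.Bundled L.Structure,
    Ω₀ ∈ K → Ω₁ ∈ K → Ω₂ ∈ K →
    ∀ (e : Ω₀ ↪[L] Ω₁) (f : Ω₀ ↪[L] Ω₂),
      ∃ (Ω₃ : CategoryTheory.Bundled L.Structure) (_ : Ω₃ ∈ K)
        (e' : Ω₁ ↪[L] Ω₃) (f' : Ω₂ ↪[L] Ω₃), e'.comp e = f'.comp f)

namespace FirstOrder.Language

open Substructure

variable (L : Language) {C : Type*} (Ω₀ Ω₁ : Type*) {M N : Type*}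
  [L.Structure Ω₀] [L.Structure Ω₁] [L.Structure M] [L.Structure N]

def IsMonochromaticCopy (χ : L.Substructure M → C) (S₁ : L.Substructure M) : Prop :=
  Nonempty (Ω₁ ≃[L] S₁) ∧ ∀ S S' : L.Substructure M, S ≤ S₁ → S' ≤ S₁ →
    Nonempty (Ω₀ ≃[L] S) → Nonempty (Ω₀ ≃[L] S') → χ S = χ S'

/-- The Erdős–Rado arrow `M ⟶ (Ω₁)^{Ω₀}_C`. -/
def Arrows (C M : Type*) [L.Structure M] : Prop :=
  ∀ χ : L.Substructure M → C, ∃ S₁, L.IsMonochromaticCopy Ω₀ Ω₁ χ S₁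

variable {L Ω₀ Ω₁}

namespace Embedding

theorem map_comap_eq_of_le_range (f : N ↪[L] M) {S : L.Substructure M}
    (h : S ≤ f.toHom.range) : (S.comap f.toHom).map f.toHom = S := by
  refine le_antisymm map_comap_le fun x hx => ?_
  obtain ⟨y, rfl⟩ := Hom.mem_range.1 (h hx)
  exact ⟨y, hx, rfl⟩

theorem exists_eq_map_of_le_map (f : N ↪[L] M) {S₁ : L.Substructure N}
    {S : L.Substructure M} (h : S ≤ S₁.map f.toHom) : ∃ T ≤ S₁, T.map f.toHom = S :=
  ⟨S.comap f.toHom,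
    (monotone_comap h).trans_eq (comap_map_eq_of_injective (f := f.toHom) f.injective S₁),
    f.map_comap_eq_of_le_range (h.trans Hom.map_le_range)⟩

theorem nonempty_equiv_map_iff (f : N ↪[L] M) (S : L.Substructure N) :
    Nonempty (Ω₀ ≃[L] S.map f.toHom) ↔ Nonempty (Ω₀ ≃[L] S) :=
  ⟨fun ⟨e⟩ => ⟨(f.substructureEquivMap S).symm.comp e⟩,
    fun ⟨e⟩ => ⟨(f.substructureEquivMap S).comp e⟩⟩

theorem isMonochromaticCopy_map_iff (f : N ↪[L] M) (χ : L.Substructure M → C)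
    (S₁ : L.Substructure N) :
    L.IsMonochromaticCopy Ω₀ Ω₁ χ (S₁.map f.toHom) ↔
      L.IsMonochromaticCopy Ω₀ Ω₁ (χ ∘ map f.toHom) S₁ := by
  refine and_congr (f.nonempty_equiv_map_iff S₁) ⟨fun h T T' hT hT' hΩT hΩT' => ?_, ?_⟩
  · exact h _ _ (monotone_map hT) (monotone_map hT')
      ((f.nonempty_equiv_map_iff T).2 hΩT) ((f.nonempty_equiv_map_iff T').2 hΩT')
  · intro h S S' hS hS'
    obtain ⟨T, hT, rfl⟩ := f.exists_eq_map_of_le_map hS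
    obtain ⟨T', hT', rfl⟩ := f.exists_eq_map_of_le_map hS'
    simpa only [nonempty_equiv_map_iff, Function.comp_apply] using h T T' hT hT'

end Embedding

theorem Arrows.of_embedding (f : N ↪[L] M) (h : L.Arrows Ω₀ Ω₁ C N) :
    L.Arrows Ω₀ Ω₁ C M := fun χ =>
  let ⟨S₁, hS₁⟩ := h (χ ∘ map f.toHom)
  ⟨S₁.map f.toHom, (f.isMonochromaticCopy_map_iff χ S₁).2 hS₁⟩

theorem IsMonochromaticCopy.congr {χ χ' : L.Substructure M → C} {S₁ : L.Substructure M}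
    (h : L.IsMonochromaticCopy Ω₀ Ω₁ χ S₁) (hχ : ∀ S ≤ S₁, χ S = χ' S) :
    L.IsMonochromaticCopy Ω₀ Ω₁ χ' S₁ :=
  ⟨h.1, fun S S' hS hS' e e' => by rw [← hχ S hS, ← hχ S' hS', h.2 S S' hS hS' e e']⟩

theorem Substructure.finite_Iic {S : L.Substructure M} [Finite S] : (Set.Iic S).Finite :=
  ((S : Set M).toFinite.finite_subsets.preimage SetLike.coe_injective.injOn).subset
    fun _ hT => SetLike.coe_subset_coe.2 hT

theorem _root_.Ultrafilter.exists_forall_finite_eventually_eq {ι α : Type*} [Finite C]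
    (U : Ultrafilter ι) (g : ι → α → C) :
    ∃ χ : α → C, ∀ F : Set α, F.Finite → ∀ᶠ i in U, ∀ a ∈ F, g i a = χ a := by
  have hlim : ∀ a, ∃ c, ∀ᶠ i in U, g i a = c := fun a => by
    obtain ⟨c, hc⟩ := (U.map fun i => g i a).eq_pure_of_finite
    exact ⟨c, Ultrafilter.mem_map.1 (hc ▸ Set.mem_singleton c : {c} ∈ U.map fun i => g i a)⟩
  choose χ hχ using hlim
  exact ⟨χ, fun F hF => (Filter.eventually_all_finite hF).2 fun a _ => hχ a⟩

theorem Arrows.exists_finite_substructure [L.IsRelational] [Finite Ω₁] [Finite C]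
    (h : L.Arrows Ω₀ Ω₁ C M) : ∃ A : L.Substructure M, Finite A ∧ L.Arrows Ω₀ Ω₁ C A := by
  by_contra! hbad
  let A (s : Finset M) : L.Substructure M := closure L (s : Set M)
  have hA_finite (s : Finset M) : Finite (A s) := by
    rw [← SetLike.coe_sort_coe, show (A s : Set M) = s from closure_eq_of_isRelational L _]
    infer_instance
  have hbad' (s : Finset M) := hbad (A s) (hA_finite s)
  simp only [Arrows, not_forall, not_exists] at hbad'
  choose χA hχA using hbad'
  let U : Ultrafilter (Finset M) := .of Filter.atTop
  obtain ⟨χ, hχ⟩ := U.exists_forall_finite_eventually_eq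
    fun s (T : L.Substructure M) => χA s (T.comap (A s).subtype.toHom)
  obtain ⟨S₁, hS₁⟩ := h χ
  have : Finite S₁ := Finite.of_equiv _ hS₁.1.some.toEquiv
  obtain ⟨s, hs_agree, hs_le⟩ := ((hχ _ (finite_Iic (S := S₁))).and
    (Ultrafilter.of_le _ (Filter.eventually_ge_atTop (S₁ : Set M).toFinite.toFinset))).exists
  have hS₁_le : S₁ ≤ (A s).subtype.toHom.range := by
    rw [range_subtype]
    exact fun x hx => subset_closure (hs_le ((S₁ : Set M).toFinite.mem_toFinset.2 hx))
  refine hχA s (S₁.comap (A s).subtype.toHom) ?_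
  rw [← Embedding.map_comap_eq_of_le_range _ hS₁_le, Embedding.isMonochromaticCopy_map_iff] at hS₁
  refine hS₁.congr fun T hT => ?_
  have hT_le : T.map (A s).subtype.toHom ≤ S₁ := (monotone_map hT).trans map_comap_le
  rw [Function.comp_apply, ← hs_agree _ hT_le,
    comap_map_eq_of_injective (f := (A s).subtype.toHom) (A s).subtype.injective]

universe w in
theorem exists_mem_ageOf_nonempty_equiv {M N : Type} [L.Structure M] [L.Structure N] [Finite N]
    (f : N ↪[L] M) : ∃ P ∈ ageOf.{_, _, w} L M, Nonempty (N ≃[L] P) := by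
  let : L.Structure (ULift.{w} N) := Equiv.inducedStructure Equiv.ulift.symm
  let e : N ≃[L] ULift.{w} N := Equiv.inducedStructureEquiv Equiv.ulift.symm
  exact ⟨⟨ULift.{w} N, inferInstance⟩,
    ⟨Finite.of_equiv _ e.toEquiv, ⟨f.comp e.symm.toEmbedding⟩⟩, ⟨e⟩⟩

end FirstOrder.Language

theorem statement12_general (L : Language) [L.IsRelational]
    (K : Set (CategoryTheory.Bundled L.Structure))
    (M : Type) [L.Structure M]
    (hage : ageOf L M = K) :
    IsRamseyClass L K ↔
      ∀ Ω₀ ∈ K, ∀ Ω₁ ∈ K, ∀ χ : L.Substructure M → Fin 2,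
        ∃ S₁ : L.Substructure M, Nonempty (Ω₁ ≃[L] S₁) ∧
          ∀ S S' : L.Substructure M, S ≤ S₁ → S' ≤ S₁ →
            Nonempty (Ω₀ ≃[L] S) → Nonempty (Ω₀ ≃[L] S') → χ S = χ S' := by
  subst hage
  constructor
  · intro hR Ω₀ hΩ₀ Ω₁ hΩ₁
    obtain ⟨Ω₂, ⟨-, ⟨g⟩⟩, hΩ₂⟩ := hR Ω₀ hΩ₀ Ω₁ hΩ₁
    exact Arrows.of_embedding g hΩ₂
  · intro hM Ω₀ hΩ₀ Ω₁ hΩ₁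
    have : Finite Ω₁ := hΩ₁.1
    obtain ⟨A, hA, hA_arrows⟩ := Arrows.exists_finite_substructure (hM Ω₀ hΩ₀ Ω₁ hΩ₁)
    obtain ⟨P, hP, ⟨e⟩⟩ := exists_mem_ageOf_nonempty_equiv A.subtype
    exact ⟨P, hP, hA_arrows.of_embedding e.toEmbedding⟩

/-- Let `K` be a Fraïssé class of finite relational structures (in a countable relational
language) and let `Δ = M` be its Fraïssé limit, i.e., the countable homogeneous structure
whose age is `K`. Then `K` is a Ramsey class if and only if for all `Ω₀, Ω₁ ∈ K` and every
`2`-coloring of the substructures of `Δ` isomorphic to `Ω₀` there is a substructure of `Δ`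
isomorphic to `Ω₁` inside which all substructures isomorphic to `Ω₀` get the same color. -/
theorem statement12 (L : Language) [L.IsRelational] [Countable (Σ i, L.Relations i)]
    (K : Set (CategoryTheory.Bundled L.Structure)) (hK : IsFraisseClass L K)
    (M : Type) [L.Structure M] [Countable M]
    (hhom : L.IsUltrahomogeneous M) (hage : ageOf L M = K) :
    IsRamseyClass L K ↔
      ∀ Ω₀ ∈ K, ∀ Ω₁ ∈ K, ∀ χ : L.Substructure M → Fin 2,
        ∃ S₁ : L.Substructure M, Nonempty (Ω₁ ≃[L] S₁) ∧
          ∀ S S' : L.Substructure M, S ≤ S₁ → S' ≤ S₁ →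
            Nonempty (Ω₀ ≃[L] S) → Nonempty (Ω₀ ≃[L] S') → χ S = χ S' :=
  statement12_general L K M hage
end
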